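/- arXiv:1203.2081 — 2 statements merged into one kernel-verified Lean document; each statement's English description precedes it below -/
import Mathlib

section
/- Let p ≥ 1 be a number of machines and let t : Fin n → ℝ be nonnegative processing times of n tasks. Suppose σ : Fin n → Fin p is a greedy (list-scheduling) assignment, i.e. for every task j and every machine m, the load of machine σ(j) from tasks preceding j is at most the load of machine m from tasks preceding j: ∑_{i < j, σ i = σ j} t i ≤ ∑_{i < j, σ i = m} t i. Then the makespan of σ satisfies max_{m} ∑_{i : σ i = m} t i ≤ (1/p) · ∑_{i} t i + (1 - 1/p) · max_{i} t i. -/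
/-- Greedy (list-scheduling) makespan bound: if `σ` assigns each task `j` to a
machine whose load from earlier tasks is minimal, then the makespan of `σ` is at
most `(1/p) · (total work) + (1 - 1/p) · (largest task)`. -/
theorem greedy_makespan_bound (n p : ℕ) (hp : 1 ≤ p)
    (t : Fin n → ℝ) (ht : ∀ i, 0 ≤ t i)
    (σ : Fin n → Fin p)
    (hgreedy : ∀ j : Fin n, ∀ m : Fin p,
      ∑ i ∈ Finset.univ.filter (fun i => i < j ∧ σ i = σ j), t i ≤
      ∑ i ∈ Finset.univ.filter (fun i => i < j ∧ σ i = m), t i) :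
    (⨆ m : Fin p, ∑ i ∈ Finset.univ.filter (fun i => σ i = m), t i) ≤
      (1 / (p : ℝ)) * ∑ i, t i + (1 - 1 / (p : ℝ)) * ⨆ i, t i := by
  have hp0 : (0:ℝ) < p := by exact_mod_cast Nat.lt_of_lt_of_le Nat.zero_lt_one hp
  have hp1 : (1:ℝ) ≤ p := by exact_mod_cast hp
  haveI : Nonempty (Fin p) := ⟨⟨0, hp⟩⟩
  have hsum0 : 0 ≤ ∑ i, t i := Finset.sum_nonneg fun i _ => ht i
  have hsup0 : 0 ≤ ⨆ i, t i := by
    rcases Nat.eq_zero_or_pos n with h | h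
    · subst h
      simp [Real.iSup_of_isEmpty]
    · exact le_trans (ht ⟨0, h⟩)
        (le_ciSup (Set.Finite.bddAbove (Set.finite_range t)) _)
  apply ciSup_le
  intro m
  by_cases hSe : (Finset.univ.filter (fun i => σ i = m)).Nonempty
  · set S := Finset.univ.filter (fun i => σ i = m) with hS
    set j := S.max' hSe with hj
    have hjS : j ∈ S := S.max'_mem hSe
    have hjm : σ j = m := (Finset.mem_filter.mp hjS).2
    have hjmax : ∀ i ∈ S, i ≤ j := fun i hi => S.le_max' i hi
    set B := ∑ i ∈ Finset.univ.filter (fun i => i < j ∧ σ i = m), t i with hB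
    have hjnot : j ∉ Finset.univ.filter (fun i : Fin n => i < j ∧ σ i = m) := by
      simp
    -- load ≤ B + t j
    have hload : ∑ i ∈ S, t i ≤ B + t j := by
      have hsub : S ⊆ insert j (Finset.univ.filter (fun i => i < j ∧ σ i = m)) := by
        intro i hi
        rcases eq_or_lt_of_le (hjmax i hi) with h | h
        · simp [h]
        · simp [Finset.mem_insert, Finset.mem_filter, h, (Finset.mem_filter.mp hi).2]
      calc ∑ i ∈ S, t i
          ≤ ∑ i ∈ insert j (Finset.univ.filter (fun i => i < j ∧ σ i = m)), t i :=
            Finset.sum_le_sum_of_subset_of_nonneg hsub (fun i _ _ => ht i)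
        _ = t j + B := Finset.sum_insert hjnot
        _ = B + t j := by ring
    -- p * B ≤ ∑_{i < j} t i
    have hfib : ∑ m' : Fin p, ∑ i ∈ Finset.univ.filter (fun i => i < j ∧ σ i = m'), t i
        = ∑ i ∈ Finset.univ.filter (fun i => i < j), t i := by
      have h := Finset.sum_fiberwise_of_maps_to
        (s := Finset.univ.filter (fun i : Fin n => i < j)) (t := Finset.univ)
        (g := σ) (fun x _ => Finset.mem_univ (σ x)) t
      rw [← h]
      apply Finset.sum_congr rfl
      intro m' _
      rw [Finset.filter_filter]
    have hpB : (p : ℝ) * B ≤ ∑ i ∈ Finset.univ.filter (fun i => i < j), t i := by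
      rw [← hfib]
      have : ∀ m' ∈ (Finset.univ : Finset (Fin p)),
          B ≤ ∑ i ∈ Finset.univ.filter (fun i => i < j ∧ σ i = m'), t i := by
        intro m' _
        have := hgreedy j m'
        rwa [hjm] at this
      calc (p : ℝ) * B = (Finset.univ : Finset (Fin p)).card • B := by
            simp [nsmul_eq_mul]
        _ ≤ ∑ m' : Fin p, ∑ i ∈ Finset.univ.filter (fun i => i < j ∧ σ i = m'), t i :=
            Finset.card_nsmul_le_sum _ _ _ this
    -- ∑_{i < j} t i + t j ≤ ∑ t
    have hless : ∑ i ∈ Finset.univ.filter (fun i => i < j), t i + t j ≤ ∑ i, t i := by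
      have hjn : j ∉ Finset.univ.filter (fun i : Fin n => i < j) := by simp
      calc ∑ i ∈ Finset.univ.filter (fun i => i < j), t i + t j
          = ∑ i ∈ insert j (Finset.univ.filter (fun i => i < j)), t i := by
            rw [Finset.sum_insert hjn]; ring
        _ ≤ ∑ i, t i := Finset.sum_le_sum_of_subset_of_nonneg
            (Finset.subset_univ _) (fun i _ _ => ht i)
    have htj : t j ≤ ⨆ i, t i :=
      le_ciSup (Set.Finite.bddAbove (Set.finite_range t)) j
    have key : (p : ℝ) * (∑ i ∈ S, t i) ≤ (∑ i, t i) + ((p:ℝ) - 1) * (⨆ i, t i) := by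
      nlinarith [mul_le_mul_of_nonneg_left hload (le_of_lt hp0)]
    have heq : (1/(p:ℝ)) * (∑ i, t i) + (1 - 1/(p:ℝ)) * (⨆ i, t i)
        = ((∑ i, t i) + ((p:ℝ) - 1) * (⨆ i, t i)) / p := by
      field_simp
    rw [heq, le_div_iff₀ hp0]
    linarith [key]
  · rw [Finset.not_nonempty_iff_eq_empty.mp hSe, Finset.sum_empty]
    have h1 : 0 ≤ (1/(p:ℝ)) * ∑ i, t i := by positivity
    have h2 : 0 ≤ (1 - 1/(p:ℝ)) * ⨆ i, t i := by
      apply mul_nonneg _ hsup0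
      have : 1/(p:ℝ) ≤ 1 := by
        rw [div_le_one hp0]; exact hp1
      linarith
    linarith
end

section
/- Let p ≥ 1 be a number of machines and let t : Fin n → ℝ be nonnegative processing times of n tasks. Suppose σ : Fin n → Fin p is a greedy (list-scheduling) assignment, i.e. for every task j and every machine m, ∑_{i < j, σ i = σ j} t i ≤ ∑_{i < j, σ i = m} t i. Let OPT be the minimum over all assignments τ : Fin n → Fin p of the makespan max_{m} ∑_{i : τ i = m} t i. Then the makespan of σ satisfies max_{m} ∑_{i : σ i = m} t i ≤ (2 - 1/p) · OPT. -/
/-- Graham's bound: any greedy (list-scheduling) assignment `σ` of `n` tasks to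
`p` machines has makespan at most `(2 - 1/p)` times the optimal makespan
`OPT = ⨅ τ, makespan τ`. -/
theorem greedy_makespan_le_two_sub_inv_p_mul_opt (n p : ℕ) (hp : 1 ≤ p)
    (t : Fin n → ℝ) (ht : ∀ i, 0 ≤ t i)
    (σ : Fin n → Fin p)
    (hgreedy : ∀ j : Fin n, ∀ m : Fin p,
      ∑ i ∈ Finset.univ.filter (fun i => i < j ∧ σ i = σ j), t i ≤
      ∑ i ∈ Finset.univ.filter (fun i => i < j ∧ σ i = m), t i) :
    (⨆ m : Fin p, ∑ i ∈ Finset.univ.filter (fun i => σ i = m), t i) ≤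
      (2 - 1 / (p : ℝ)) *
        ⨅ τ : Fin n → Fin p,
          ⨆ m : Fin p, ∑ i ∈ Finset.univ.filter (fun i => τ i = m), t i := by
  haveI : NeZero p := ⟨by omega⟩
  haveI : Nonempty (Fin p) := Fin.pos_iff_nonempty.mp (by omega)
  have hp0 : (0:ℝ) < p := by exact_mod_cast Nat.pos_of_ne_zero (by omega)
  set S := ∑ i, t i with hS
  set OPT := ⨅ τ : Fin n → Fin p,
      ⨆ m : Fin p, ∑ i ∈ Finset.univ.filter (fun i => τ i = m), t i with hOPT
  have hload_le : ∀ (τ : Fin n → Fin p) (m : Fin p),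
      ∑ i ∈ Finset.univ.filter (fun i => τ i = m), t i ≤
        ⨆ m' : Fin p, ∑ i ∈ Finset.univ.filter (fun i => τ i = m'), t i :=
    fun τ m => le_ciSup (f := fun m' => ∑ i ∈ Finset.univ.filter (fun i => τ i = m'), t i)
      (Finite.bddAbove_range _) m
  have hfiber : ∀ τ : Fin n → Fin p,
      ∑ m : Fin p, ∑ i ∈ Finset.univ.filter (fun i => τ i = m), t i = S :=
    fun τ => Finset.sum_fiberwise _ _ _
  have hOPT_S : S / p ≤ OPT := by
    refine le_ciInf fun τ => (div_le_iff₀ hp0).2 ?_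
    calc S = ∑ m : Fin p, ∑ i ∈ Finset.univ.filter (fun i => τ i = m), t i :=
          (hfiber τ).symm
      _ ≤ ∑ _m : Fin p, ⨆ m' : Fin p, ∑ i ∈ Finset.univ.filter (fun i => τ i = m'), t i :=
          Finset.sum_le_sum fun m _ => hload_le τ m
      _ = (⨆ m' : Fin p, ∑ i ∈ Finset.univ.filter (fun i => τ i = m'), t i) * p := by
          simp [Finset.sum_const, mul_comm]
  have htj : ∀ j : Fin n, t j ≤ OPT := by
    intro j
    refine le_ciInf fun τ => le_trans ?_ (hload_le τ (τ j))
    refine Finset.single_le_sum (fun i _ => ht i) ?_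
    simp
  have hOPT0 : 0 ≤ OPT := by
    refine le_ciInf fun τ => le_trans ?_ (hload_le τ (Classical.arbitrary _))
    exact Finset.sum_nonneg fun i _ => ht i
  have hcoef : (1:ℝ) ≤ 2 - 1 / p := by
    have : 1 / (p:ℝ) ≤ 1 := by
      rw [div_le_one hp0]; exact_mod_cast hp
    linarith
  refine ciSup_le fun m => ?_
  by_cases hm : (Finset.univ.filter (fun i => σ i = m)).Nonempty
  · set j := (Finset.univ.filter (fun i => σ i = m)).max' hm with hj
    have hjm : σ j = m := by
      have := (Finset.univ.filter (fun i => σ i = m)).max'_mem hm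
      simpa [hj] using this
    have hle : ∀ i : Fin n, σ i = m → i ≤ j := fun i hi =>
      Finset.le_max' _ i (by simp [hi])
    -- split the load of m
    have hsplit : ∑ i ∈ Finset.univ.filter (fun i => σ i = m), t i =
        (∑ i ∈ Finset.univ.filter (fun i => i < j ∧ σ i = σ j), t i) + t j := by
      have hset : Finset.univ.filter (fun i => σ i = m) =
          insert j (Finset.univ.filter (fun i => i < j ∧ σ i = σ j)) := by
        ext i
        simp only [Finset.mem_filter, Finset.mem_univ, true_and, Finset.mem_insert, hjm]
        constructor
        · intro hi
          rcases eq_or_lt_of_le (hle i hi) with h | h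
          · exact Or.inl h
          · exact Or.inr ⟨h, hi⟩
        · rintro (rfl | ⟨_, hi⟩)
          · exact hjm
          · exact hi
      rw [hset, Finset.sum_insert (by simp), add_comm]
    -- greedy bound
    have hA : (p:ℝ) * ∑ i ∈ Finset.univ.filter (fun i => i < j ∧ σ i = σ j), t i ≤
        S - t j := by
      have h1 : (p:ℝ) * ∑ i ∈ Finset.univ.filter (fun i => i < j ∧ σ i = σ j), t i ≤
          ∑ m' : Fin p, ∑ i ∈ Finset.univ.filter (fun i => i < j ∧ σ i = m'), t i := by
        have : (p:ℝ) * ∑ i ∈ Finset.univ.filter (fun i => i < j ∧ σ i = σ j), t i =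
            ∑ _m' : Fin p, ∑ i ∈ Finset.univ.filter (fun i => i < j ∧ σ i = σ j), t i := by
          simp [Finset.sum_const, mul_comm]
        rw [this]
        exact Finset.sum_le_sum fun m' _ => hgreedy j m'
      have h2 : ∑ m' : Fin p, ∑ i ∈ Finset.univ.filter (fun i => i < j ∧ σ i = m'), t i =
          ∑ i ∈ Finset.univ.filter (fun i => i < j), t i := by
        have : ∀ m' : Fin p, Finset.univ.filter (fun i => i < j ∧ σ i = m') =
            (Finset.univ.filter (fun i => i < j)).filter (fun i => σ i = m') := by
          intro m'; rw [Finset.filter_filter]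
        simp_rw [this]
        exact Finset.sum_fiberwise _ _ _
      have h3 : ∑ i ∈ Finset.univ.filter (fun i => i < j), t i ≤ S - t j := by
        have hsub : Finset.univ.filter (fun i => i < j) ⊆ Finset.univ.erase j := by
          intro i hi
          simp only [Finset.mem_filter] at hi
          exact Finset.mem_erase.2 ⟨ne_of_lt hi.2, Finset.mem_univ i⟩
        have := Finset.sum_le_sum_of_subset_of_nonneg hsub (fun i _ _ => ht i)
        have herase : ∑ i ∈ Finset.univ.erase j, t i = S - t j := by
          rw [hS, ← Finset.add_sum_erase _ t (Finset.mem_univ j)]; ring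
        linarith
      calc (p:ℝ) * _ ≤ _ := h1
        _ = _ := h2
        _ ≤ _ := h3
    have hAle : ∑ i ∈ Finset.univ.filter (fun i => i < j ∧ σ i = σ j), t i ≤
        (S - t j) / p := (le_div_iff₀ hp0).2 (by linarith [hA])
    have hSp : S / p ≤ OPT := hOPT_S
    have htjO : t j ≤ OPT := htj j
    rw [hsplit]
    have : (∑ i ∈ Finset.univ.filter (fun i => i < j ∧ σ i = σ j), t i) + t j ≤
        S / p + (1 - 1/p) * t j := by
      have : (S - t j) / p = S / p - t j / p := by ring
      rw [this] at hAle
      have hexp : (1 - 1/(p:ℝ)) * t j = t j - t j / p := by ring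
      linarith
    have h1p : (0:ℝ) ≤ 1 - 1/p := by linarith
    calc _ ≤ S / p + (1 - 1/p) * t j := this
      _ ≤ OPT + (1 - 1/p) * OPT := by
          have := mul_le_mul_of_nonneg_left htjO h1p
          linarith
      _ = (2 - 1/p) * OPT := by ring
  · rw [Finset.not_nonempty_iff_eq_empty.1 hm]
    simp only [Finset.sum_empty]
    exact mul_nonneg (by linarith) hOPT0
end
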